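/- arXiv:math/0503219 — 4 statements merged into one kernel-verified Lean document; each statement's English description precedes it below -/
import Mathlib

section
/- For a linear function f on a Euclidean triangle with vertices x1, x2, x3 and interior angles α1, α2, α3 (αi at vertex xi), the Dirichlet energy equals (1/4) · Σ_{i∈Z/3Z} cot(αi) · (f(x_{i+1}) − f(x_{i+2}))², where the Dirichlet energy is (1/2)∫ over the triangle of ‖∇f‖². -/
open EuclideanGeometry MeasureTheory Set Matrix

lemma vol_std_tri_prod :
    volume {q : ℝ × ℝ | 0 ≤ q.1 ∧ 0 ≤ q.2 ∧ q.1 + q.2 ≤ 1} = ENNReal.ofReal (1/2) := by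
  have hS : MeasurableSet {q : ℝ × ℝ | 0 ≤ q.1 ∧ 0 ≤ q.2 ∧ q.1 + q.2 ≤ 1} := by
    apply MeasurableSet.inter
    · exact measurableSet_le measurable_const measurable_fst
    apply MeasurableSet.inter
    · exact measurableSet_le measurable_const measurable_snd
    · exact measurableSet_le (measurable_fst.add measurable_snd) measurable_const
  rw [Measure.volume_eq_prod, Measure.prod_apply hS]
  have hslice : (fun x => volume (Prod.mk x ⁻¹' {q : ℝ × ℝ | 0 ≤ q.1 ∧ 0 ≤ q.2 ∧ q.1 + q.2 ≤ 1}))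
      = (Set.Icc (0:ℝ) 1).indicator (fun x => ENNReal.ofReal (1 - x)) := by
    funext x
    rw [Set.indicator_apply]
    split_ifs with hx
    · have : Prod.mk x ⁻¹' {q : ℝ × ℝ | 0 ≤ q.1 ∧ 0 ≤ q.2 ∧ q.1 + q.2 ≤ 1}
          = Set.Icc 0 (1 - x) := by
        ext y
        simp only [Set.mem_preimage, Set.mem_setOf_eq, Set.mem_Icc]
        constructor
        · rintro ⟨_, h1, h2⟩; exact ⟨h1, by linarith⟩
        · rintro ⟨h1, h2⟩; exact ⟨hx.1, h1, by linarith⟩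
      rw [this, Real.volume_Icc, sub_zero]
    · have : Prod.mk x ⁻¹' {q : ℝ × ℝ | 0 ≤ q.1 ∧ 0 ≤ q.2 ∧ q.1 + q.2 ≤ 1} = ∅ := by
        ext y
        simp only [Set.mem_preimage, Set.mem_setOf_eq, Set.mem_empty_iff_false, iff_false]
        rintro ⟨h1, h2, h3⟩
        simp only [Set.mem_Icc, not_and_or, not_le] at hx
        rcases hx with h | h
        · linarith
        · linarith
      rw [this, measure_empty]
  rw [hslice, lintegral_indicator measurableSet_Icc]
  rw [← ofReal_integral_eq_lintegral_ofReal]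
  · rw [MeasureTheory.integral_Icc_eq_integral_Ioc, ← intervalIntegral.integral_of_le (by norm_num : (0:ℝ) ≤ 1)]
    have : ∫ x in (0:ℝ)..1, (1 - x) = 1/2 := by
      rw [intervalIntegral.integral_sub intervalIntegrable_const intervalIntegral.intervalIntegrable_id]
      simp
      norm_num
    rw [this]
  · exact (continuous_const.sub continuous_id).integrableOn_Icc
  · exact (ae_restrict_iff' measurableSet_Icc).2 (ae_of_all _ (fun x hx => by simp only [Pi.zero_apply]; linarith [hx.2]))

lemma vol_std_tri :
    volume {p : EuclideanSpace ℝ (Fin 2) | 0 ≤ p 0 ∧ 0 ≤ p 1 ∧ p 0 + p 1 ≤ 1}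
      = ENNReal.ofReal (1/2) := by
  have h1 := EuclideanSpace.volume_preserving_symm_measurableEquiv_toLp (Fin 2)
  have h2 := volume_preserving_finTwoArrow ℝ
  have h := h2.comp h1
  have hS : MeasurableSet {q : ℝ × ℝ | 0 ≤ q.1 ∧ 0 ≤ q.2 ∧ q.1 + q.2 ≤ 1} := by
    apply MeasurableSet.inter
    · exact measurableSet_le measurable_const measurable_fst
    apply MeasurableSet.inter
    · exact measurableSet_le measurable_const measurable_snd
    · exact measurableSet_le (measurable_fst.add measurable_snd) measurable_const
  have hpre : ((MeasurableEquiv.finTwoArrow : (Fin 2 → ℝ) ≃ᵐ ℝ × ℝ) ∘ (MeasurableEquiv.toLp 2 (Fin 2 → ℝ)).symm) ⁻¹'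
      {q : ℝ × ℝ | 0 ≤ q.1 ∧ 0 ≤ q.2 ∧ q.1 + q.2 ≤ 1}
      = {p : EuclideanSpace ℝ (Fin 2) | 0 ≤ p 0 ∧ 0 ≤ p 1 ∧ p 0 + p 1 ≤ 1} := rfl
  rw [← hpre, MeasurePreserving.measure_preimage h hS.nullMeasurableSet, vol_std_tri_prod]

lemma std_tri_eq_convexHull :
    convexHull ℝ ({0, EuclideanSpace.single 0 1, EuclideanSpace.single 1 1} :
        Set (EuclideanSpace ℝ (Fin 2)))
      = {p : EuclideanSpace ℝ (Fin 2) | 0 ≤ p 0 ∧ 0 ≤ p 1 ∧ p 0 + p 1 ≤ 1} := by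
  apply le_antisymm
  · apply convexHull_min
    · rintro p (rfl | rfl | rfl) <;>
        simp [EuclideanSpace.single_apply]
    · -- convexity of the set
      have h0 : Convex ℝ {p : EuclideanSpace ℝ (Fin 2) | 0 ≤ p 0} := by
        intro a ha b hb s t hs ht hst
        simp only [mem_setOf_eq] at *
        have : (s • a + t • b) 0 = s * a 0 + t * b 0 := rfl
        rw [this]; positivity
      have h1 : Convex ℝ {p : EuclideanSpace ℝ (Fin 2) | 0 ≤ p 1} := by
        intro a ha b hb s t hs ht hst
        simp only [mem_setOf_eq] at *
        have : (s • a + t • b) 1 = s * a 1 + t * b 1 := rfl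
        rw [this]; positivity
      have h2 : Convex ℝ {p : EuclideanSpace ℝ (Fin 2) | p 0 + p 1 ≤ 1} := by
        intro a ha b hb s t hs ht hst
        simp only [mem_setOf_eq] at *
        have e0 : (s • a + t • b) 0 = s * a 0 + t * b 0 := rfl
        have e1 : (s • a + t • b) 1 = s * a 1 + t * b 1 := rfl
        rw [e0, e1]
        nlinarith [mul_le_mul_of_nonneg_left ha hs, mul_le_mul_of_nonneg_left hb ht]
      have : {p : EuclideanSpace ℝ (Fin 2) | 0 ≤ p 0 ∧ 0 ≤ p 1 ∧ p 0 + p 1 ≤ 1}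
          = {p : EuclideanSpace ℝ (Fin 2) | 0 ≤ p 0} ∩ ({p | 0 ≤ p 1} ∩ {p | p 0 + p 1 ≤ 1}) := by
        ext p; simp [and_assoc]
      rw [this]
      exact h0.inter (h1.inter h2)
  · rintro p ⟨hp0, hp1, hps⟩
    rw [convexHull_eq]
    refine ⟨Fin 3, Finset.univ, ![1 - p 0 - p 1, p 0, p 1],
      ![0, EuclideanSpace.single 0 1, EuclideanSpace.single 1 1], ?_, ?_, ?_, ?_⟩
    · intro i _
      fin_cases i <;> simp <;> linarith
    · simp [Fin.sum_univ_three]; ring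
    · intro i _
      fin_cases i <;> simp
    · rw [Finset.centerMass_eq_of_sum_1]
      · ext i
        fin_cases i <;>
          simp [Fin.sum_univ_three, EuclideanSpace.single_apply]
      · simp [Fin.sum_univ_three]; ring

lemma coord_pt (x1 x2 x3 : EuclideanSpace ℝ (Fin 2)) (r : ℝ)
    (c0 : x3 0 = r * (x2 0 - x1 0) + x1 0) (c1 : x3 1 = r * (x2 1 - x1 1) + x1 1) :
    x3 = r • (x2 - x1) +ᵥ x1 := by
  ext i
  fin_cases i
  · exact c0
  · exact c1

lemma cross_ne_zero (x1 x2 x3 : EuclideanSpace ℝ (Fin 2))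
    (hnd : AffineIndependent ℝ ![x1, x2, x3]) :
    (x2 0 - x1 0) * (x3 1 - x1 1) - (x2 1 - x1 1) * (x3 0 - x1 0) ≠ 0 := by
  intro hcr
  rw [affineIndependent_iff_not_collinear] at hnd
  apply hnd
  rw [show Set.range ![x1, x2, x3] = ({x1, x2, x3} : Set (EuclideanSpace ℝ (Fin 2))) by
    ext p; simp [Fin.exists_fin_succ]; tauto]
  have hmem : x1 ∈ ({x1, x2, x3} : Set (EuclideanSpace ℝ (Fin 2))) := by simp
  rw [collinear_iff_of_mem hmem]
  by_cases hu : x2 = x1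
  · refine ⟨x3 - x1, ?_⟩
    intro p hp
    rcases hp with h | h | h
    · exact ⟨0, by rw [h]; simp⟩
    · exact ⟨0, by rw [h, hu]; simp⟩
    · refine ⟨1, ?_⟩
      rw [h]
      exact coord_pt x1 (x3) x3 1 (by ring) (by ring)
  · have hu' : x2 0 - x1 0 ≠ 0 ∨ x2 1 - x1 1 ≠ 0 := by
      by_contra hcon
      push_neg at hcon
      apply hu
      have := coord_pt x1 x1 x2 0 (by simp; linarith [hcon.1]) (by simp; linarith [hcon.2])
      simpa using this
    refine ⟨x2 - x1, ?_⟩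
    intro p hp
    rcases hp with h | h | h
    · exact ⟨0, by rw [h]; simp⟩
    · exact ⟨1, by rw [h]; exact coord_pt x1 x2 x2 1 (by ring) (by ring)⟩
    · rcases hu' with h0 | h0
      · refine ⟨(x3 0 - x1 0) / (x2 0 - x1 0), ?_⟩
        rw [h]
        refine coord_pt x1 x2 x3 _ (by field_simp; ring) ?_
        field_simp
        nlinarith [hcr]
      · refine ⟨(x3 1 - x1 1) / (x2 1 - x1 1), ?_⟩
        rw [h]
        refine coord_pt x1 x2 x3 _ ?_ (by field_simp; ring)
        field_simp
        nlinarith [hcr]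

lemma vol_triangle (x1 x2 x3 : EuclideanSpace ℝ (Fin 2)) :
    volume (convexHull ℝ ({x1, x2, x3} : Set (EuclideanSpace ℝ (Fin 2))))
      = ENNReal.ofReal
          (|(x2 0 - x1 0) * (x3 1 - x1 1) - (x2 1 - x1 1) * (x3 0 - x1 0)| / 2) := by
  set M : Matrix (Fin 2) (Fin 2) ℝ :=
    Matrix.of ![![x2 0 - x1 0, x3 0 - x1 0], ![x2 1 - x1 1, x3 1 - x1 1]] with hM
  set L : EuclideanSpace ℝ (Fin 2) →ₗ[ℝ] EuclideanSpace ℝ (Fin 2) := Matrix.toEuclideanLin M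
    with hL
  have hdet : LinearMap.det L = (x2 0 - x1 0) * (x3 1 - x1 1) - (x2 1 - x1 1) * (x3 0 - x1 0) := by
    rw [hL, Matrix.toEuclideanLin_eq_toLin, LinearMap.det_toLin]
    simp [hM, Matrix.det_fin_two]
    ring
  set s : Set (EuclideanSpace ℝ (Fin 2)) :=
    {0, EuclideanSpace.single 0 1, EuclideanSpace.single 1 1} with hs
  have himg : ({x1, x2, x3} : Set (EuclideanSpace ℝ (Fin 2)))
      = (x1 +ᵥ ·) '' (L '' s) := by
    have h0 : x1 +ᵥ L 0 = x1 := by simp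
    have h1 : x1 +ᵥ L (EuclideanSpace.single 0 1) = x2 := by
      ext i
      show x1 i + (L (EuclideanSpace.single 0 1)) i = x2 i
      rw [hL, Matrix.toEuclideanLin_apply]
      fin_cases i <;>
        simp [Matrix.mulVec, dotProduct, hM, Fin.sum_univ_two,
          EuclideanSpace.single_apply] <;> ring
    have h2 : x1 +ᵥ L (EuclideanSpace.single 1 1) = x3 := by
      ext i
      show x1 i + (L (EuclideanSpace.single 1 1)) i = x3 i
      rw [hL, Matrix.toEuclideanLin_apply]
      fin_cases i <;>
        simp [Matrix.mulVec, dotProduct, hM, Fin.sum_univ_two,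
          EuclideanSpace.single_apply] <;> ring
    rw [hs]
    simp only [Set.image_insert_eq, Set.image_singleton, h0, h1, h2]
  rw [himg]
  have hconv : convexHull ℝ ((x1 +ᵥ ·) '' (L '' s))
      = (x1 +ᵥ ·) '' (L '' convexHull ℝ s) := by
    have h1 := (AffineEquiv.constVAdd ℝ (EuclideanSpace ℝ (Fin 2)) x1).toAffineMap.image_convexHull
      (L '' s)
    have h2 := L.image_convexHull s
    have h1' : (fun x => x1 +ᵥ x) '' (convexHull ℝ (⇑L '' s))
        = convexHull ℝ ((fun x => x1 +ᵥ x) '' (⇑L '' s)) := h1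
    rw [← h1', h2]
  rw [hconv]
  have htrans : ((x1 +ᵥ ·) '' (L '' convexHull ℝ s)) = (fun y => -x1 + y) ⁻¹' (L '' convexHull ℝ s) := by
    ext y
    constructor
    · rintro ⟨z, hz, rfl⟩
      simpa [vadd_eq_add] using hz
    · intro hy
      exact ⟨-x1 + y, hy, by simp [vadd_eq_add]⟩
  rw [htrans, measure_preimage_add, Measure.addHaar_image_linearMap, hdet,
    std_tri_eq_convexHull, vol_std_tri, ← ENNReal.ofReal_mul (abs_nonneg _), mul_one_div]

lemma cot_angle_coords (w z : EuclideanSpace ℝ (Fin 2))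
    (h : w 0 * z 1 - w 1 * z 0 ≠ 0) :
    Real.cot (InnerProductGeometry.angle w z)
      = (w 0 * z 0 + w 1 * z 1) / |w 0 * z 1 - w 1 * z 0| := by
  have hw : w ≠ 0 := by
    rintro rfl
    simp at h
  have hz : z ≠ 0 := by
    rintro rfl
    simp at h
  have hnw : (0:ℝ) < ‖w‖ := norm_pos_iff.2 hw
  have hnz : (0:ℝ) < ‖z‖ := norm_pos_iff.2 hz
  have hinner : (inner ℝ w z : ℝ) = w 0 * z 0 + w 1 * z 1 := by
    rw [PiLp.inner_apply, Fin.sum_univ_two]; simp only [RCLike.inner_apply, conj_trivial]; ring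
  have hinnerww : (inner ℝ w w : ℝ) = w 0 * w 0 + w 1 * w 1 := by
    rw [PiLp.inner_apply, Fin.sum_univ_two]; simp only [RCLike.inner_apply, conj_trivial]
  have hinnerzz : (inner ℝ z z : ℝ) = z 0 * z 0 + z 1 * z 1 := by
    rw [PiLp.inner_apply, Fin.sum_univ_two]; simp only [RCLike.inner_apply, conj_trivial]
  have hsin := InnerProductGeometry.sin_angle_mul_norm_mul_norm w z
  have hkey : (inner ℝ w w : ℝ) * (inner ℝ z z : ℝ) - (inner ℝ w z : ℝ) * (inner ℝ w z : ℝ)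
      = (w 0 * z 1 - w 1 * z 0)^2 := by
    rw [hinner, hinnerww, hinnerzz]; ring
  rw [hkey, Real.sqrt_sq_eq_abs] at hsin
  have habs : (0:ℝ) < |w 0 * z 1 - w 1 * z 0| := abs_pos.2 h
  have hsin' : Real.sin (InnerProductGeometry.angle w z)
      = |w 0 * z 1 - w 1 * z 0| / (‖w‖ * ‖z‖) := by
    field_simp at hsin ⊢
    linarith
  have hsinne : Real.sin (InnerProductGeometry.angle w z) ≠ 0 := by
    rw [hsin']; positivity
  rw [Real.cot_eq_cos_div_sin, InnerProductGeometry.cos_angle, hsin', hinner]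
  rw [div_div_div_cancel_right₀]
  · positivity

set_option maxHeartbeats 1000000 in
/-- Dirichlet energy of a linear function on a triangle equals the cotan edge-weight form. -/
theorem stmt_0 (x1 x2 x3 : EuclideanSpace ℝ (Fin 2))
    (hnd : AffineIndependent ℝ ![x1, x2, x3])
    (g : EuclideanSpace ℝ (Fin 2)) (c : ℝ) (f : EuclideanSpace ℝ (Fin 2) → ℝ)
    (hf : ∀ x, f x = (inner ℝ g x : ℝ) + c) :
    (1/2) * (volume (convexHull ℝ ({x1, x2, x3} : Set (EuclideanSpace ℝ (Fin 2))))).toReal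
        * ‖g‖^2
      = (1/4) * (Real.cot (∠ x2 x1 x3) * (f x2 - f x3)^2
          + Real.cot (∠ x3 x2 x1) * (f x3 - f x1)^2
          + Real.cot (∠ x1 x3 x2) * (f x1 - f x2)^2) := by
  set cr := (x2 0 - x1 0) * (x3 1 - x1 1) - (x2 1 - x1 1) * (x3 0 - x1 0) with hcr
  have hcr0 : cr ≠ 0 := cross_ne_zero x1 x2 x3 hnd
  -- volume
  rw [vol_triangle, ENNReal.toReal_ofReal (by positivity), ← hcr]
  -- angles
  have hang1 : ∠ x2 x1 x3 = InnerProductGeometry.angle (x2 - x1) (x3 - x1) := rfl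
  have hang2 : ∠ x3 x2 x1 = InnerProductGeometry.angle (x3 - x2) (x1 - x2) := rfl
  have hang3 : ∠ x1 x3 x2 = InnerProductGeometry.angle (x1 - x3) (x2 - x3) := rfl
  have hsub : ∀ (a b : EuclideanSpace ℝ (Fin 2)) (i : Fin 2), (a - b) i = a i - b i :=
    fun a b i => rfl
  have hc1 : (x2 - x1) 0 * (x3 - x1) 1 - (x2 - x1) 1 * (x3 - x1) 0 = cr := by
    simp only [hsub, hcr]
  have hc2 : (x3 - x2) 0 * (x1 - x2) 1 - (x3 - x2) 1 * (x1 - x2) 0 = cr := by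
    simp only [hsub, hcr]; ring
  have hc3 : (x1 - x3) 0 * (x2 - x3) 1 - (x1 - x3) 1 * (x2 - x3) 0 = cr := by
    simp only [hsub, hcr]; ring
  rw [hang1, hang2, hang3,
    cot_angle_coords _ _ (by rw [hc1]; exact hcr0),
    cot_angle_coords _ _ (by rw [hc2]; exact hcr0),
    cot_angle_coords _ _ (by rw [hc3]; exact hcr0)]
  rw [show |(x2 - x1) 0 * (x3 - x1) 1 - (x2 - x1) 1 * (x3 - x1) 0| = |cr| by rw [hc1],
    show |(x3 - x2) 0 * (x1 - x2) 1 - (x3 - x2) 1 * (x1 - x2) 0| = |cr| by rw [hc2],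
    show |(x1 - x3) 0 * (x2 - x3) 1 - (x1 - x3) 1 * (x2 - x3) 0| = |cr| by rw [hc3]]
  simp only [hsub]
  have hnorm : ‖g‖^2 = g 0 ^ 2 + g 1 ^ 2 := by
    rw [← real_inner_self_eq_norm_sq]
    rw [PiLp.inner_apply, Fin.sum_univ_two]; simp only [RCLike.inner_apply, conj_trivial]; ring
  have hfv : ∀ x : EuclideanSpace ℝ (Fin 2), f x = g 0 * x 0 + g 1 * x 1 + c := by
    intro x
    rw [hf x]
    simp [PiLp.inner_apply, RCLike.inner_apply, Fin.sum_univ_two]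
    ring
  rw [hnorm, hfv x1, hfv x2, hfv x3]
  -- now pure algebra
  clear_value cr
  rcases abs_cases cr with ⟨habs, hsign⟩ | ⟨habs, hsign⟩ <;> rw [habs]
  · field_simp
    rw [hcr]
    ring
  · have h2 : -cr ≠ 0 := neg_ne_zero.2 hcr0
    field_simp
    rw [hcr]
    ring
end

section
/- Let D and D̃ be two distinct open disks in R². Then the closed circular segments conv((∂D) \ D̃) and conv((∂D̃) \ D) have disjoint interiors. -/
open Metric

/-- The circular segments conv((∂D) \ D̃) and conv((∂D̃) \ D) of two distinct open disks
have disjoint interiors. -/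
theorem stmt_5 (m m' : EuclideanSpace ℝ (Fin 2)) (r r' : ℝ) (hr : 0 < r) (hr' : 0 < r')
    (hne : (m, r) ≠ (m', r')) :
    interior (convexHull ℝ (sphere m r \ ball m' r')) ∩
      interior (convexHull ℝ (sphere m' r' \ ball m r)) = ∅ := by
  set v : EuclideanSpace ℝ (Fin 2) := m - m' with hv
  set c : ℝ := ‖m'‖^2 - ‖m‖^2 + r^2 - r'^2 with hc
  set f : EuclideanSpace ℝ (Fin 2) → ℝ := fun x => 2 * (inner ℝ x v : ℝ) + c with hf
  have key : ∀ x : EuclideanSpace ℝ (Fin 2),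
      f x = ‖x - m'‖^2 - ‖x - m‖^2 + r^2 - r'^2 := by
    intro x
    simp only [hf, hv, hc, @norm_sub_sq_real (EuclideanSpace ℝ (Fin 2)), inner_sub_right]
    ring
  have hlin : IsLinearMap ℝ (fun x : EuclideanSpace ℝ (Fin 2) => 2 * (inner ℝ x v : ℝ)) := by
    constructor
    · intro x y; rw [inner_add_left]; ring
    · intro a x; simp only [real_inner_smul_left, smul_eq_mul]; ring
  have h1 : convexHull ℝ (sphere m r \ ball m' r') ⊆ {x | 0 ≤ f x} := by
    apply convexHull_min
    · rintro x ⟨hx1, hx2⟩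
      rw [mem_sphere_iff_norm] at hx1
      rw [mem_ball, not_lt, dist_eq_norm] at hx2
      have h2 : r' ^ 2 ≤ ‖x - m'‖ ^ 2 := pow_le_pow_left₀ hr'.le hx2 2
      simp only [Set.mem_setOf_eq, key x, hx1]
      nlinarith
    · have he : {x : EuclideanSpace ℝ (Fin 2) | 0 ≤ f x}
          = {x : EuclideanSpace ℝ (Fin 2) | -c ≤ 2 * (inner ℝ x v : ℝ)} := by
        ext x; simp only [Set.mem_setOf_eq, hf]; constructor <;> intro <;> linarith
      rw [he]
      exact convex_halfSpace_ge hlin (-c)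
  have h2 : convexHull ℝ (sphere m' r' \ ball m r) ⊆ {x | f x ≤ 0} := by
    apply convexHull_min
    · rintro x ⟨hx1, hx2⟩
      rw [mem_sphere_iff_norm] at hx1
      rw [mem_ball, not_lt, dist_eq_norm] at hx2
      have h2 : r ^ 2 ≤ ‖x - m‖ ^ 2 := pow_le_pow_left₀ hr.le hx2 2
      simp only [Set.mem_setOf_eq, key x, hx1]
      nlinarith
    · have he : {x : EuclideanSpace ℝ (Fin 2) | f x ≤ 0}
          = {x : EuclideanSpace ℝ (Fin 2) | 2 * (inner ℝ x v : ℝ) ≤ -c} := by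
        ext x; simp only [Set.mem_setOf_eq, hf]; constructor <;> intro <;> linarith
      rw [he]
      exact convex_halfSpace_le hlin (-c)
  ext x
  simp only [Set.mem_inter_iff, Set.mem_empty_iff_false, iff_false]
  rintro ⟨hxa, hxb⟩
  obtain ⟨ε, hε, hballa⟩ := Metric.mem_nhds_iff.mp (mem_interior_iff_mem_nhds.mp hxa)
  obtain ⟨ε', hε', hballb⟩ := Metric.mem_nhds_iff.mp (mem_interior_iff_mem_nhds.mp hxb)
  have hpos : ∀ y ∈ ball x ε, 0 ≤ f y := fun y hy => h1 (hballa hy)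
  have hneg : ∀ y ∈ ball x ε', f y ≤ 0 := fun y hy => h2 (hballb hy)
  have hfx0 : f x = 0 :=
    le_antisymm (hneg x (mem_ball_self hε')) (hpos x (mem_ball_self hε))
  have hv0 : v = 0 := by
    by_contra hvne
    have hnv : 0 < ‖v‖ := norm_pos_iff.mpr hvne
    set δ : ℝ := min ε ε' / 2 with hδ
    have hδpos : 0 < δ := half_pos (lt_min hε hε')
    set y := x + (δ / ‖v‖) • v with hy
    have hdy : dist y x = δ := by
      rw [hy, dist_eq_norm, add_sub_cancel_left, norm_smul, Real.norm_eq_abs,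
        abs_of_pos (div_pos hδpos hnv), div_mul_cancel₀]
      exact hnv.ne'
    have hfy : f y = f x + 2 * δ * ‖v‖ := by
      simp only [hf, hy, inner_add_left, real_inner_smul_left,
        real_inner_self_eq_norm_sq]
      field_simp
      ring
    have hy1 : 0 ≤ f y := by
      apply hpos y
      rw [mem_ball, hdy]
      have := min_le_left ε ε'
      linarith
    have hy2 : f y ≤ 0 := by
      apply hneg y
      rw [mem_ball, hdy]
      have := min_le_right ε ε'
      linarith
    nlinarith
  have hmm : m = m' := sub_eq_zero.mp hv0
  have hcx : f x = c := by
    simp only [hf, hv0, inner_zero_right, mul_zero, zero_add]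
  have hrr : r = r' := by
    rw [hcx, hc, hmm] at hfx0
    nlinarith
  exact hne (by rw [hmm, hrr])
end

section
/- Let D be an open disk in R², H ⊂ R² a closed half-plane, and p ∈ D with p ∉ H. Then there exists an open disk D̃ such that D \ D̃ ⊂ int H, D̃ \ D ⊂ R² \ H, and the power of p with respect to D̃ is strictly smaller than the power of p with respect to D, i.e. ‖p − m̃‖² − r̃² < ‖p − m‖² − r², where m, r and m̃, r̃ are the centers and radii. -/
open Metric

/-- Given an open disk D, a closed half-plane H and a point p ∈ D with p ∉ H, there is
another open disk D̃ with D \ D̃ ⊂ int H, D̃ \ D ⊂ ℝ² \ H whose power at p is strictly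
smaller than that of D. -/
theorem stmt_6 (m : EuclideanSpace ℝ (Fin 2)) (r : ℝ) (hr : 0 < r)
    (n : EuclideanSpace ℝ (Fin 2)) (d : ℝ) (hn : n ≠ 0)
    (H : Set (EuclideanSpace ℝ (Fin 2)))
    (hH : H = {x | (inner ℝ n x : ℝ) ≤ d})
    (p : EuclideanSpace ℝ (Fin 2)) (hp : p ∈ ball m r) (hpH : p ∉ H) :
    ∃ (m' : EuclideanSpace ℝ (Fin 2)) (r' : ℝ), 0 < r' ∧
      ball m r \ ball m' r' ⊆ interior H ∧
      ball m' r' \ ball m r ⊆ Hᶜ ∧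
      dist p m' ^ 2 - r' ^ 2 < dist p m ^ 2 - r ^ 2 := by
  have hpd : d < (inner ℝ n p : ℝ) := by
    by_contra h
    exact hpH (hH ▸ (le_of_not_gt h))
  obtain ⟨c, hc⟩ : ∃ c : ℝ, c = (inner ℝ n m : ℝ) - d := ⟨_, rfl⟩
  obtain ⟨t, htdef⟩ : ∃ t : ℝ, t = r ^ 2 / (2 * (|c| + 1)) := ⟨_, rfl⟩
  have habs : (0:ℝ) < |c| + 1 := by positivity
  have ht : 0 < t := by rw [htdef]; positivity
  have htb : t * (|c| + 1) = r ^ 2 / 2 := by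
    rw [htdef]; field_simp
  obtain ⟨R2, hR2⟩ : ∃ R2 : ℝ, R2 = r ^ 2 + t * c + t ^ 2 * ‖n‖ ^ 2 / 4 := ⟨_, rfl⟩
  have hR2pos : 0 < R2 := by
    have h1 : t * -|c| ≤ t * c := mul_le_mul_of_nonneg_left (neg_abs_le c) ht.le
    have h2 : 0 ≤ t ^ 2 * ‖n‖ ^ 2 / 4 := by positivity
    have h3 : (0:ℝ) ≤ r ^ 2 := sq_nonneg r
    rw [hR2]
    nlinarith [h1, h2, htb, ht, h3]
  obtain ⟨m', hm'⟩ : ∃ m' : EuclideanSpace ℝ (Fin 2), m' = m + (t / 2) • n := ⟨_, rfl⟩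
  obtain ⟨r', hr'def⟩ : ∃ r' : ℝ, r' = Real.sqrt R2 := ⟨_, rfl⟩
  have hr' : 0 < r' := hr'def ▸ Real.sqrt_pos.mpr hR2pos
  have hr'2 : r' ^ 2 = R2 := by rw [hr'def]; exact Real.sq_sqrt hR2pos.le
  have key : ∀ x : EuclideanSpace ℝ (Fin 2),
      dist x m' ^ 2 - r' ^ 2 = (dist x m ^ 2 - r ^ 2) - t * ((inner ℝ n x : ℝ) - d) := by
    intro x
    have hx : x - m' = (x - m) - (t / 2) • n := by
      rw [hm']; abel
    have h1 : (inner ℝ (x - m) ((t / 2) • n) : ℝ)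
        = (t / 2) * ((inner ℝ n x : ℝ) - (inner ℝ n m : ℝ)) := by
      rw [real_inner_smul_right, real_inner_comm, inner_sub_right]
    have h2 : ‖(t / 2) • n‖ ^ 2 = t ^ 2 * ‖n‖ ^ 2 / 4 := by
      rw [norm_smul, Real.norm_eq_abs, abs_of_pos (by positivity : (0:ℝ) < t / 2)]
      ring
    rw [dist_eq_norm, dist_eq_norm, hr'2, hx, @norm_sub_sq_real, h1, h2, hR2, hc]
    ring
  refine ⟨m', r', hr', ?_, ?_, ?_⟩
  · intro x hx
    obtain ⟨hx1, hx2⟩ := hx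
    have h1 : dist x m ^ 2 - r ^ 2 < 0 := by
      have := mem_ball.mp hx1
      nlinarith [dist_nonneg (x := x) (y := m)]
    have h2 : 0 ≤ dist x m' ^ 2 - r' ^ 2 := by
      have h := mem_ball.not.mp hx2
      push_neg at h
      nlinarith [dist_nonneg (x := x) (y := m'), hr']
    have hlt : (inner ℝ n x : ℝ) < d := by nlinarith [key x, ht]
    have hsub : {y : EuclideanSpace ℝ (Fin 2) | (inner ℝ n y : ℝ) < d} ⊆ interior H := by
      rw [hH]
      refine interior_maximal (fun y hy => ?_) ?_
      · have hy' : (inner ℝ n y : ℝ) < d := hy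
        exact hy'.le
      · exact isOpen_lt (continuous_const.inner continuous_id) continuous_const
    exact hsub hlt
  · intro x hx
    obtain ⟨hx1, hx2⟩ := hx
    have h1 : dist x m' ^ 2 - r' ^ 2 < 0 := by
      have := mem_ball.mp hx1
      nlinarith [dist_nonneg (x := x) (y := m'), hr']
    have h2 : 0 ≤ dist x m ^ 2 - r ^ 2 := by
      have h := mem_ball.not.mp hx2
      push_neg at h
      nlinarith [dist_nonneg (x := x) (y := m), hr]
    have hlt : d < (inner ℝ n x : ℝ) := by nlinarith [key x, ht]
    rw [hH]
    exact not_le.mpr hlt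
  · have h4 : 0 < t * ((inner ℝ n p : ℝ) - d) := mul_pos ht (sub_pos.mpr hpd)
    linarith [key p, h4]
end

section
/- Dirichlet problem: on a finite connected weighted graph with positive edge weights and nonempty boundary set B ⊆ V, for any prescribed g : B → R there exists a unique function f : V → R with f = g on B and Δf(i) = 0 for all i ∉ B. Moreover f is the unique minimizer of the Dirichlet energy E(f) = (1/2) Σ_{(i,j)∈E} w_{ij}(f(i) − f(j))² among all functions agreeing with g on B. -/
/-!
The boundary-value map `f ↦ (f on B, Δf off B)` is a linear endomorphism of the
finite-dimensional space `V → ℝ`, so existence and uniqueness both follow from its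
injectivity. By the discrete Green identity `∑_{i,j adj} w_{ij}(u_i - u_j)(h_i - h_j) =
2 ∑_i h_i Δu_i`, a function vanishing on `B` and harmonic off `B` has zero energy; zero
energy forces it to be constant along edges, hence constant on the connected graph, hence
zero since `B ≠ ∅`. The same identity shows that the energy of `f + h`, for `f` harmonic
off `B` and `h` vanishing on `B`, is `E f + E h`, which gives the minimization.
-/

open Finset

lemma SimpleGraph.Connected.eq_of_forall_adj_eq {V α : Type*} {G : SimpleGraph V}
    (hconn : G.Connected) {h : V → α} (hadj : ∀ i j, G.Adj i j → h i = h j) (i j : V) :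
    h i = h j := by
  obtain ⟨p⟩ := hconn.preconnected i j
  induction p with
  | nil => rfl
  | cons hA _ ih => exact (hadj _ _ hA).trans ih

namespace WeightedGraph

variable {V : Type*} [Fintype V] (G : SimpleGraph V) [DecidableRel G.Adj]

lemma sum_neighborFinset_comm {M : Type*} [AddCommMonoid M] (F : V → V → M) :
    ∑ i, ∑ j ∈ G.neighborFinset i, F i j = ∑ i, ∑ j ∈ G.neighborFinset i, F j i :=
  Finset.sum_comm' fun _ _ => by simp [G.adj_comm]

def laplacian (w : V → V → ℝ) : (V → ℝ) →ₗ[ℝ] V → ℝ where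
  toFun f i := ∑ j ∈ G.neighborFinset i, w i j * (f i - f j)
  map_add' f h := by
    ext i
    simp only [Pi.add_apply, ← sum_add_distrib]
    exact sum_congr rfl fun _ _ => by ring
  map_smul' c f := by
    ext i
    simp only [Pi.smul_apply, smul_eq_mul, RingHom.id_apply, mul_sum]
    exact sum_congr rfl fun _ _ => by ring

/-- Twice the Dirichlet energy: every edge is counted once from each endpoint. -/
def energy (w : V → V → ℝ) (f : V → ℝ) : ℝ :=
  ∑ i, ∑ j ∈ G.neighborFinset i, w i j * (f i - f j) ^ 2

variable {G} {w : V → V → ℝ}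

lemma laplacian_apply (f : V → ℝ) (i : V) :
    laplacian G w f i = ∑ j ∈ G.neighborFinset i, w i j * (f i - f j) := rfl

theorem greens_identity (hsym : ∀ i j, w i j = w j i) (u h : V → ℝ) :
    ∑ i, ∑ j ∈ G.neighborFinset i, w i j * (u i - u j) * (h i - h j)
      = 2 * ∑ i, h i * laplacian G w u i := by
  have hswap : ∑ i, ∑ j ∈ G.neighborFinset i, w i j * (u i - u j) * h j
      = -∑ i, ∑ j ∈ G.neighborFinset i, w i j * (u i - u j) * h i := by
    rw [sum_neighborFinset_comm, ← sum_neg_distrib]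
    refine sum_congr rfl fun i _ => ?_
    rw [← sum_neg_distrib]
    exact sum_congr rfl fun j _ => by rw [hsym j i]; ring
  calc ∑ i, ∑ j ∈ G.neighborFinset i, w i j * (u i - u j) * (h i - h j)
      = ∑ i, ∑ j ∈ G.neighborFinset i, w i j * (u i - u j) * h i
        - ∑ i, ∑ j ∈ G.neighborFinset i, w i j * (u i - u j) * h j := by
        simp only [mul_sub, sum_sub_distrib]
    _ = 2 * ∑ i, h i * laplacian G w u i := by
        rw [hswap, sub_neg_eq_add, ← two_mul]
        congr 1
        simp only [laplacian_apply, mul_sum]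
        exact sum_congr rfl fun i _ => sum_congr rfl fun j _ => by ring

lemma energy_eq_two_mul_sum_mul_laplacian (hsym : ∀ i j, w i j = w j i) (f : V → ℝ) :
    energy G w f = 2 * ∑ i, f i * laplacian G w f i := by
  rw [← greens_identity (G := G) hsym]
  exact sum_congr rfl fun i _ => sum_congr rfl fun j _ => by ring

lemma energy_add (hsym : ∀ i j, w i j = w j i) (f h : V → ℝ) :
    energy G w (f + h) = energy G w f + 4 * ∑ i, h i * laplacian G w f i + energy G w h := by
  have hcross := greens_identity (G := G) hsym f h
  rw [show (4 : ℝ) = 2 * 2 by norm_num, mul_assoc, ← hcross, mul_sum]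
  simp only [energy, ← sum_add_distrib, mul_sum]
  exact sum_congr rfl fun i _ => sum_congr rfl fun j _ => by simp only [Pi.add_apply]; ring

lemma sum_mul_laplacian_eq_zero {B : Finset V} {f h : V → ℝ} (hh : ∀ i ∈ B, h i = 0)
    (hf : ∀ i ∉ B, laplacian G w f i = 0) : ∑ i, h i * laplacian G w f i = 0 :=
  sum_eq_zero fun i _ => by
    by_cases hi : i ∈ B
    · rw [hh i hi, zero_mul]
    · rw [hf i hi, mul_zero]

theorem energy_add_of_laplacian_eq_zero (hsym : ∀ i j, w i j = w j i) {B : Finset V}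
    {f h : V → ℝ} (hf : ∀ i ∉ B, laplacian G w f i = 0) (hh : ∀ i ∈ B, h i = 0) :
    energy G w (f + h) = energy G w f + energy G w h := by
  rw [energy_add hsym, sum_mul_laplacian_eq_zero hh hf, mul_zero, add_zero]

variable (hpos : ∀ i j, G.Adj i j → 0 < w i j)
include hpos

lemma energy_term_nonneg (f : V → ℝ) (i : V) :
    ∀ j ∈ G.neighborFinset i, 0 ≤ w i j * (f i - f j) ^ 2 := fun j hj =>
  mul_nonneg (hpos i j ((G.mem_neighborFinset i j).mp hj)).le (sq_nonneg _)

lemma energy_nonneg (f : V → ℝ) : 0 ≤ energy G w f :=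
  sum_nonneg fun i _ => sum_nonneg (energy_term_nonneg hpos f i)

lemma adj_eq_of_energy_eq_zero {f : V → ℝ} (hf : energy G w f = 0) {i j : V}
    (hij : G.Adj i j) : f i = f j := by
  have hi := (sum_eq_zero_iff_of_nonneg fun i _ => sum_nonneg (energy_term_nonneg hpos f i)).mp
    hf i (mem_univ i)
  have hterm := (sum_eq_zero_iff_of_nonneg (energy_term_nonneg hpos f i)).mp hi j
    ((G.mem_neighborFinset i j).mpr hij)
  have := (mul_eq_zero_iff_left (hpos i j hij).ne').mp hterm
  exact sub_eq_zero.mp (pow_eq_zero_iff two_ne_zero |>.mp this)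

lemma eq_zero_of_energy_eq_zero (hconn : G.Connected) {B : Finset V} (hB : B.Nonempty)
    {f : V → ℝ} (hfB : ∀ i ∈ B, f i = 0) (hf : energy G w f = 0) : f = 0 := by
  obtain ⟨b, hb⟩ := hB
  ext i
  rw [hconn.eq_of_forall_adj_eq (fun _ _ => adj_eq_of_energy_eq_zero hpos hf) i b, hfB b hb,
    Pi.zero_apply]

lemma eq_zero_of_laplacian_eq_zero (hconn : G.Connected) (hsym : ∀ i j, w i j = w j i)
    {B : Finset V} (hB : B.Nonempty) {f : V → ℝ} (hfB : ∀ i ∈ B, f i = 0)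
    (hf : ∀ i ∉ B, laplacian G w f i = 0) : f = 0 :=
  eq_zero_of_energy_eq_zero hpos hconn hB hfB <| by
    rw [energy_eq_two_mul_sum_mul_laplacian hsym, sum_mul_laplacian_eq_zero hfB hf, mul_zero]

omit hpos

variable [DecidableEq V]

variable (G w) in
def dirichletOperator (B : Finset V) : (V → ℝ) →ₗ[ℝ] V → ℝ :=
  LinearMap.pi fun i =>
    if i ∈ B then LinearMap.proj i else LinearMap.proj i ∘ₗ laplacian G w

lemma dirichletOperator_apply (B : Finset V) (f : V → ℝ) (i : V) :
    dirichletOperator G w B f i = if i ∈ B then f i else laplacian G w f i := by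
  rw [dirichletOperator, LinearMap.pi_apply]
  split_ifs <;> rfl

lemma dirichletOperator_eq_iff {B : Finset V} {f g : V → ℝ} :
    dirichletOperator G w B f = (fun i => if i ∈ B then g i else 0) ↔
      (∀ i ∈ B, f i = g i) ∧ ∀ i ∉ B, laplacian G w f i = 0 := by
  simp only [funext_iff, dirichletOperator_apply]
  constructor
  · intro h
    exact ⟨fun i hi => by simpa [hi] using h i, fun i hi => by simpa [hi] using h i⟩
  · rintro ⟨hB, hV⟩ i
    split_ifs with hi
    exacts [hB i hi, hV i hi]

lemma dirichletOperator_bijective (hpos : ∀ i j, G.Adj i j → 0 < w i j)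
    (hconn : G.Connected) (hsym : ∀ i j, w i j = w j i) {B : Finset V} (hB : B.Nonempty) :
    Function.Bijective (dirichletOperator G w B) := by
  have hinj : Function.Injective (dirichletOperator G w B) := by
    rw [← LinearMap.ker_eq_bot, LinearMap.ker_eq_bot']
    intro f hf
    have hf' := dirichletOperator_eq_iff (g := 0).mp (by rw [hf]; ext; simp)
    exact eq_zero_of_laplacian_eq_zero hpos hconn hsym hB hf'.1 hf'.2
  exact ⟨hinj, LinearMap.injective_iff_surjective.mp hinj⟩

end WeightedGraph

open WeightedGraph in
/-- Dirichlet boundary value problem on a finite connected weighted graph: existence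
and uniqueness of the harmonic extension, which uniquely minimizes the Dirichlet
energy among functions with the given boundary values. -/
theorem stmt_12 {V : Type*} [Fintype V] [DecidableEq V]
    (G : SimpleGraph V) [DecidableRel G.Adj] (hconn : G.Connected)
    (w : V → V → ℝ) (hsym : ∀ i j, w i j = w j i)
    (hpos : ∀ i j, G.Adj i j → 0 < w i j)
    (B : Finset V) (hB : B.Nonempty) (g : V → ℝ)
    (E : (V → ℝ) → ℝ)
    (hE : ∀ f, E f = (1/4) * ∑ i, ∑ j ∈ G.neighborFinset i, w i j * (f i - f j)^2) :
    (∃! f : V → ℝ, (∀ i ∈ B, f i = g i) ∧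
        (∀ i ∉ B, ∑ j ∈ G.neighborFinset i, w i j * (f i - f j) = 0)) ∧
    (∀ f : V → ℝ, (∀ i ∈ B, f i = g i) →
      (∀ i ∉ B, ∑ j ∈ G.neighborFinset i, w i j * (f i - f j) = 0) →
      ∀ f' : V → ℝ, (∀ i ∈ B, f' i = g i) →
        E f ≤ E f' ∧ (E f' = E f → f' = f)) := by
  have hE' : ∀ f, E f = energy G w f / 4 := fun f => by rw [hE, energy]; ring
  refine ⟨?_, fun f hfB hf f' hf'B => ?_⟩
  · simpa only [dirichletOperator_eq_iff, laplacian_apply] using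
      (dirichletOperator_bijective hpos hconn hsym hB).existsUnique
        (fun i => if i ∈ B then g i else 0)
  obtain ⟨h, rfl⟩ : ∃ h, f' = f + h := ⟨f' - f, by abel⟩
  have hhB : ∀ i ∈ B, h i = 0 := fun i hi => by
    simpa [hfB i hi] using hf'B i hi
  have hsplit := energy_add_of_laplacian_eq_zero hsym hf hhB
  rw [hE', hE', hsplit]
  refine ⟨by linarith [energy_nonneg hpos h], fun heq => ?_⟩
  rw [eq_zero_of_energy_eq_zero hpos hconn hB hhB (by linarith), add_zero]
end
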